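/- Let η₁, η₂ satisfy 0 < η₁ ≤ η₂ < 1 and set η = min{η₁, 1 - η₂}. Then 0 < η ≤ ½, and if pred > 0 and |ared - ered| ≤ η · pred, then: (a) ered/pred > η₂ implies ared/pred > η₂ - η ≥ 2η₂ - 1, and (b) ered/pred ≤ η₁ implies ared/pred ≤ η₁ + η ≤ 2η₁. -/

import Mathlib

lemma abs_div_sub_div_le_of_abs_sub_le_mul {a b c η : ℝ} (hc : 0 < c) (h : |a - b| ≤ η * c) :
    |a / c - b / c| ≤ η := by
  rwa [← sub_div, abs_div, abs_of_pos hc, div_le_iff₀ hc]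

theorem stmt_13 (η₁ η₂ : ℝ) (h₁ : 0 < η₁) (h₁₂ : η₁ ≤ η₂) (h₂ : η₂ < 1) :
    let η := min η₁ (1 - η₂)
    0 < η ∧ η ≤ 1 / 2 ∧
    ∀ pred ared ered : ℝ, 0 < pred → |ared - ered| ≤ η * pred →
      ((ered / pred > η₂ → ared / pred > η₂ - η ∧ η₂ - η ≥ 2 * η₂ - 1) ∧
       (ered / pred ≤ η₁ → ared / pred ≤ η₁ + η ∧ η₁ + η ≤ 2 * η₁)) := by
  intro η
  have hη₁ : η ≤ η₁ := min_le_left _ _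
  have hη₂ : η ≤ 1 - η₂ := min_le_right _ _
  refine ⟨lt_min h₁ (sub_pos.2 h₂), by linarith, fun pred ared ered hpred hclose => ?_⟩
  obtain ⟨hlower, hupper⟩ := abs_le.1 (abs_div_sub_div_le_of_abs_sub_le_mul hpred hclose)
  exact ⟨fun _ => ⟨by linarith, by linarith⟩, fun _ => ⟨by linarith, by linarith⟩⟩
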